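/- arXiv:2603.25482 — 3 statements merged into one kernel-verified Lean document; each statement's English description precedes it below -/
import Mathlib

section
/- Suppose S, S₋₁, D are independent nonnegative random variables with S and S₋₁ identically distributed, f : ℝ → ℝ is nonnegative, non-increasing, and differentiable with |f'| non-increasing on [0,∞). If E[D + S + 1] · sqrt(E[(f'(S))²]) / E[f(S + S₋₁)] ≤ (1 - P(S₋₁ - D > 0)) / sqrt(P(S₋₁ - D > 0)), and Δ² P(S₋₁ - D > Δ) is non-increasing for Δ > 1, then for every Δ ≥ 0 the numerator of the derivative of G(Δ) = E[f(S + max(S₋₁ - Δ - D, 0))] / (Δ + E[D] + E[max(S₋₁ - Δ - D, 0)]) is nonpositive, hence G attains its maximum at Δ = 0. -/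
open MeasureTheory ProbabilityTheory Set

/-!
Instead of signing the derivative of `G`, compare `G Δ` with `G 0` directly. Put
`p = P(S₋₁ - D > 0)` and `W_Δ = max (S₋₁ - D - Δ) 0`. Passing from `0` to `Δ` shortens the wait
by at most `Δ`, and only on `{S₋₁ - D > 0}`; so the denominator grows by at least `Δ (1 - p)`,
while (mean value theorem, `|f'|` being largest at `S`, then Cauchy–Schwarz) the numerator grows by
at most `Δ √E[f'(S)²] √p`. Since `E[W₀] ≤ E[S]` and `E[f(S + S₋₁)] ≤ E[f(S + W₀)]`, the
hypothesis makes the ratio of these two slopes at most `G 0`, and a mediant cannot exceed `G 0`.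
-/

lemma max_sub_max_sub_le (x : ℝ) {Δ : ℝ} (hΔ : 0 ≤ Δ) :
    max x 0 - max (x - Δ) 0 ≤ if 0 < x then Δ else 0 := by
  split_ifs <;> (simp only [max_def]; split_ifs <;> linarith)

lemma abs_sub_le_of_antitoneOn_abs_deriv {f f' : ℝ → ℝ} {s a b : ℝ}
    (hf : ∀ x ∈ Ici s, HasDerivAt f (f' x) x) (hf' : AntitoneOn (fun x => |f' x|) (Ici s))
    (ha : s ≤ a) (hb : s ≤ b) : |f b - f a| ≤ |f' s| * |b - a| :=
  Convex.norm_image_sub_le_of_norm_hasDerivWithin_le (fun x hx => (hf x hx).hasDerivWithinAt)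
    (fun _ hx => hf' self_mem_Ici hx hx) (convex_Ici s) ha hb

lemma div_le_div_of_le_add_mul {N N₀ B B' Δ a b : ℝ} (hN : 0 ≤ N) (hB : 0 < B) (hΔ : 0 ≤ Δ)
    (hb : 0 ≤ b) (hNum : N ≤ N₀ + Δ * a) (hDen : B + Δ * b ≤ B') (hab : a * B ≤ N₀ * b) :
    N / B' ≤ N₀ / B :=
  calc N / B' ≤ (N₀ + Δ * a) / (B + Δ * b) :=
        div_le_div₀ (hN.trans hNum) hNum (by positivity) hDen
    _ ≤ N₀ / B := by
        rw [div_le_div_iff₀ (by positivity) hB]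
        nlinarith [mul_le_mul_of_nonneg_left hab hΔ]

lemma sqrt_mul_sqrt_mul_le_of_div_le {c e r F N q : ℝ} (hq : 0 < q) (hq1 : q ≤ 1) (hF : 0 < F)
    (hFN : F ≤ N) (hc : c ≤ e) (h : e * √r / F ≤ 1 / √q - √q) : √r * √q * c ≤ N * (1 - q) := by
  have hsq : 0 < √q := Real.sqrt_pos.mpr hq
  rw [div_le_iff₀ hF] at h
  calc √r * √q * c = √q * (c * √r) := by ring
    _ ≤ √q * (e * √r) := by gcongr
    _ ≤ √q * ((1 / √q - √q) * F) := mul_le_mul_of_nonneg_left h hsq.le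
    _ = F * (1 - q) := by field_simp; rw [Real.sq_sqrt hq.le]
    _ ≤ N * (1 - q) := mul_le_mul_of_nonneg_right hFN (by linarith)

section
variable {Ω : Type*} [MeasurableSpace Ω] {μ : Measure Ω} [IsFiniteMeasure μ]

lemma setIntegral_abs_le_sqrt_mul_sqrt {g : Ω → ℝ} (hg : MemLp g 2 μ) {A : Set Ω}
    (hA : MeasurableSet A) : ∫ ω in A, |g ω| ∂μ ≤ √(∫ ω, g ω ^ 2 ∂μ) * √(μ.real A) := by
  have hind : MemLp (A.indicator fun _ => (1 : ℝ)) (ENNReal.ofReal 2) μ := by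
    simpa using (memLp_const (1 : ℝ)).indicator hA
  have holder := integral_mul_le_Lp_mul_Lq_of_nonneg Real.HolderConjugate.two_two
    (ae_of_all _ fun ω => abs_nonneg (g ω)) (ae_of_all _ (indicator_nonneg fun _ _ => zero_le_one))
    (by rw [ENNReal.ofReal_ofNat]; exact hg.abs) hind
  have hsq : ∀ ω, A.indicator (fun _ => (1 : ℝ)) ω ^ (2 : ℝ) = A.indicator (fun _ => 1) ω := by
    intro ω; by_cases hω : ω ∈ A <;> simp [hω]
  have hmul : ∀ ω, |g ω| * A.indicator (fun _ => (1 : ℝ)) ω = A.indicator (fun ω => |g ω|) ω := by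
    intro ω; by_cases hω : ω ∈ A <;> simp [hω]
  simpa only [hsq, hmul, integral_indicator hA, setIntegral_const, smul_eq_mul, mul_one,
    Real.rpow_two, sq_abs, ← Real.sqrt_eq_rpow] using holder

lemma integral_max_sub_le {X : Ω → ℝ} (hXm : Measurable X) (hX : Integrable X μ) {Δ : ℝ}
    (hΔ : 0 ≤ Δ) :
    ∫ ω, max (X ω) 0 ∂μ - ∫ ω, max (X ω - Δ) 0 ∂μ ≤ Δ * μ.real {ω | 0 < X ω} := by
  have hA : MeasurableSet {ω | 0 < X ω} := measurableSet_lt measurable_const hXm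
  have hXΔ : Integrable (fun ω => max (X ω - Δ) 0) μ := (hX.sub (integrable_const Δ)).pos_part
  rw [← integral_sub hX.pos_part hXΔ, mul_comm, ← smul_eq_mul, ← integral_indicator_const Δ hA]
  refine integral_mono (hX.pos_part.sub hXΔ) ((integrable_const Δ).indicator hA) fun ω => ?_
  simpa only [indicator_apply, mem_ofPred_eq] using max_sub_max_sub_le (X ω) hΔ

lemma integral_max_pos {X : Ω → ℝ} (hX : Integrable X μ)
    (h : 0 < μ.real {ω | 0 < X ω}) : 0 < ∫ ω, max (X ω) 0 ∂μ := by
  have hsupp : Function.support (fun ω => max (X ω) 0) = {ω | 0 < X ω} := by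
    ext ω; by_cases hω : 0 < X ω <;> simp [hω, not_lt.mp]
  rw [integral_pos_iff_support_of_nonneg (fun ω => le_max_right (X ω) 0) hX.pos_part, hsupp]
  exact pos_iff_ne_zero.mpr ((measureReal_ne_zero_iff).mp h.ne')

lemma integral_comp_add_max_sub_le {S X : Ω → ℝ} {f f' : ℝ → ℝ} (hXm : Measurable X)
    (hS0 : ∀ ω, 0 ≤ S ω) (hf : ∀ x ∈ Ici 0, HasDerivAt f (f' x) x)
    (hf' : AntitoneOn (fun x => |f' x|) (Ici 0)) (hf'S : MemLp (fun ω => f' (S ω)) 2 μ)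
    {Δ : ℝ} (hΔ : 0 ≤ Δ) (hint : Integrable (fun ω => f (S ω + max (X ω) 0)) μ)
    (hintΔ : Integrable (fun ω => f (S ω + max (X ω - Δ) 0)) μ) :
    ∫ ω, f (S ω + max (X ω - Δ) 0) ∂μ ≤ ∫ ω, f (S ω + max (X ω) 0) ∂μ
      + Δ * (√(∫ ω, f' (S ω) ^ 2 ∂μ) * √(μ.real {ω | 0 < X ω})) := by
  set A := {ω | 0 < X ω}
  have hA : MeasurableSet A := measurableSet_lt measurable_const hXm
  have hpt : ∀ ω, f (S ω + max (X ω - Δ) 0) - f (S ω + max (X ω) 0)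
      ≤ A.indicator (fun ω => Δ * |f' (S ω)|) ω := by
    intro ω
    have hmono : max (X ω - Δ) 0 ≤ max (X ω) 0 := max_le_max (by linarith) le_rfl
    have hlip := abs_sub_le_of_antitoneOn_abs_deriv
      (fun x hx => hf x (mem_Ici.mpr ((hS0 ω).trans hx))) (hf'.mono (Ici_subset_Ici.mpr (hS0 ω)))
      (le_add_of_nonneg_right (le_max_right (X ω) 0))
      (le_add_of_nonneg_right (le_max_right (X ω - Δ) 0))
    calc _ ≤ |f' (S ω)| * (max (X ω) 0 - max (X ω - Δ) 0) := by
          rw [add_sub_add_left_eq_sub, abs_sub_comm (max (X ω - Δ) 0),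
            abs_of_nonneg (sub_nonneg.mpr hmono)] at hlip
          exact (le_abs_self _).trans hlip
      _ ≤ |f' (S ω)| * if 0 < X ω then Δ else 0 :=
          mul_le_mul_of_nonneg_left (max_sub_max_sub_le (X ω) hΔ) (abs_nonneg _)
      _ = A.indicator (fun ω => Δ * |f' (S ω)|) ω := by
          simp only [indicator_apply, A, mem_ofPred_eq]; split_ifs <;> ring
  have hint' : Integrable (A.indicator fun ω => Δ * |f' (S ω)|) μ :=
    ((hf'S.integrable one_le_two).abs.const_mul Δ).indicator hA
  calc ∫ ω, f (S ω + max (X ω - Δ) 0) ∂μ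
        = ∫ ω, f (S ω + max (X ω) 0) ∂μ
          + ∫ ω, (f (S ω + max (X ω - Δ) 0) - f (S ω + max (X ω) 0)) ∂μ := by
        rw [integral_sub hintΔ hint]; ring
    _ ≤ ∫ ω, f (S ω + max (X ω) 0) ∂μ + Δ * ∫ ω in A, |f' (S ω)| ∂μ := by
        rw [← integral_const_mul, ← integral_indicator hA]
        exact add_le_add le_rfl (integral_mono (hintΔ.sub hint) hint' hpt)
    _ ≤ _ := by gcongr; exact setIntegral_abs_le_sqrt_mul_sqrt hf'S hA

end

theorem stmt4_general {Ω : Type*} [MeasurableSpace Ω] (μ : Measure Ω) [IsProbabilityMeasure μ]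
    (S S₁ D : Ω → ℝ) (f f' : ℝ → ℝ)
    (hSm : Measurable S) (hS1m : Measurable S₁) (hDm : Measurable D)
    (hS0 : ∀ ω, 0 ≤ S ω) (hS10 : ∀ ω, 0 ≤ S₁ ω) (hD0 : ∀ ω, 0 ≤ D ω)
    (hId : IdentDistrib S S₁ μ μ)
    (hf0 : ∀ x, 0 ≤ f x) (hfanti : Antitone f)
    (hderiv : ∀ x, HasDerivAt f (f' x) x)
    (habs : AntitoneOn (fun x => |f' x|) (Ici (0:ℝ)))
    (hp : 0 < (μ {ω | S₁ ω - D ω > 0}).toReal)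
    (hfpos : 0 < ∫ ω, f (S ω + S₁ ω) ∂μ)
    (hSint : Integrable S μ) (hDint : Integrable D μ)
    (hf'int : Integrable (fun ω => (f' (S ω)) ^ 2) μ)
    (hfint : ∀ Δ : ℝ, 0 ≤ Δ →
      Integrable (fun ω => f (S ω + max (S₁ ω - Δ - D ω) 0)) μ)
    (hcond : (∫ ω, (D ω + S ω + 1) ∂μ) *
        Real.sqrt (∫ ω, (f' (S ω)) ^ 2 ∂μ) / (∫ ω, f (S ω + S₁ ω) ∂μ)
      ≤ 1 / Real.sqrt ((μ {ω | S₁ ω - D ω > 0}).toReal)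
          - Real.sqrt ((μ {ω | S₁ ω - D ω > 0}).toReal)) :
    ∀ Δ : ℝ, 0 ≤ Δ →
      (∫ ω, f (S ω + max (S₁ ω - Δ - D ω) 0) ∂μ) /
          (Δ + (∫ ω, D ω ∂μ) + ∫ ω, max (S₁ ω - Δ - D ω) 0 ∂μ)
        ≤ (∫ ω, f (S ω + max (S₁ ω - D ω) 0) ∂μ) /
          ((∫ ω, D ω ∂μ) + ∫ ω, max (S₁ ω - D ω) 0 ∂μ) := by
  intro Δ hΔ
  have hp' : 0 < μ.real {ω | 0 < S₁ ω - D ω} := hp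
  have hXm : Measurable fun ω => S₁ ω - D ω := hS1m.sub hDm
  have hX : Integrable (fun ω => S₁ ω - D ω) μ := (hId.integrable_iff.mp hSint).sub hDint
  have hW₀S₁ : ∀ ω, max (S₁ ω - D ω) 0 ≤ S₁ ω := fun ω => max_le (by linarith [hD0 ω]) (hS10 ω)
  have hW₀ : ∫ ω, max (S₁ ω - D ω) 0 ∂μ ≤ ∫ ω, S ω ∂μ :=
    hId.integral_eq ▸ integral_mono hX.pos_part (hId.integrable_iff.mp hSint) hW₀S₁
  have hF : ∫ ω, f (S ω + S₁ ω) ∂μ ≤ ∫ ω, f (S ω + max (S₁ ω - D ω) 0) ∂μ :=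
    integral_mono (Integrable.of_integral_ne_zero hfpos.ne') (by simpa using hfint 0 le_rfl)
      fun ω => hfanti (by linarith [hW₀S₁ ω])
  have hB : ∫ ω, D ω ∂μ + ∫ ω, max (S₁ ω - D ω) 0 ∂μ ≤ ∫ ω, (D ω + S ω + 1) ∂μ := by
    rw [integral_add (f := fun ω => D ω + S ω) (hDint.add hSint) (integrable_const 1),
      integral_add hDint hSint]
    simp only [integral_const, probReal_univ, smul_eq_mul, mul_one]
    linarith
  have hkey := sqrt_mul_sqrt_mul_le_of_div_le hp' measureReal_le_one hfpos hF hB hcond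
  have hf'm : Measurable fun ω => f' (S ω) :=
    (funext fun x => (hderiv x).deriv) ▸ (measurable_deriv f).comp hSm
  have hf'S : MemLp (fun ω => f' (S ω)) 2 μ :=
    (memLp_two_iff_integrable_sq hf'm.aestronglyMeasurable).mpr hf'int
  have hnum := integral_comp_add_max_sub_le hXm hS0 (fun x _ => hderiv x) habs hf'S hΔ
    (by simpa using hfint 0 le_rfl) (by simpa only [sub_right_comm _ Δ] using hfint Δ hΔ)
  have hden := integral_max_sub_le hXm hX hΔ
  have hpos := integral_max_pos hX hp'
  simp only [sub_right_comm _ Δ]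
  exact div_le_div_of_le_add_mul (integral_nonneg fun ω => hf0 _)
    (by linarith [integral_nonneg (μ := μ) (f := D) hD0]) hΔ
    (sub_nonneg.mpr measureReal_le_one) hnum (by linarith) hkey

/-- Theorem 1: Under the stated sufficient condition, the reward
`G(Δ) = E[f(S + max (S₋₁ - Δ - D) 0)] / (Δ + E[D] + E[max (S₋₁ - Δ - D) 0])`
attains its maximum at `Δ = 0`. -/
theorem stmt4 {Ω : Type*} [MeasurableSpace Ω] (μ : Measure Ω) [IsProbabilityMeasure μ]
    (S S₁ D : Ω → ℝ) (f f' : ℝ → ℝ)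
    (hSm : Measurable S) (hS1m : Measurable S₁) (hDm : Measurable D)
    (hS0 : ∀ ω, 0 ≤ S ω) (hS10 : ∀ ω, 0 ≤ S₁ ω) (hD0 : ∀ ω, 0 ≤ D ω)
    (hIndSS : IndepFun S S₁ μ) (hIndSD : IndepFun S D μ) (hIndS1D : IndepFun S₁ D μ)
    (hId : IdentDistrib S S₁ μ μ)
    (hf0 : ∀ x, 0 ≤ f x) (hfanti : Antitone f)
    (hderiv : ∀ x, HasDerivAt f (f' x) x)
    (habs : AntitoneOn (fun x => |f' x|) (Ici (0:ℝ)))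
    (hp : 0 < (μ {ω | S₁ ω - D ω > 0}).toReal)
    (hp1 : (μ {ω | S₁ ω - D ω > 0}).toReal < 1)
    (hfpos : 0 < ∫ ω, f (S ω + S₁ ω) ∂μ)
    (hSint : Integrable S μ) (hDint : Integrable D μ)
    (hf'int : Integrable (fun ω => (f' (S ω)) ^ 2) μ)
    (hfint : ∀ Δ : ℝ, 0 ≤ Δ →
      Integrable (fun ω => f (S ω + max (S₁ ω - Δ - D ω) 0)) μ)
    (htail : ∀ Δ₁ Δ₂ : ℝ, 1 < Δ₁ → Δ₁ ≤ Δ₂ →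
      Δ₂ ^ 2 * (μ {ω | S₁ ω - D ω > Δ₂}).toReal
        ≤ Δ₁ ^ 2 * (μ {ω | S₁ ω - D ω > Δ₁}).toReal)
    (hcond : (∫ ω, (D ω + S ω + 1) ∂μ) *
        Real.sqrt (∫ ω, (f' (S ω)) ^ 2 ∂μ) / (∫ ω, f (S ω + S₁ ω) ∂μ)
      ≤ 1 / Real.sqrt ((μ {ω | S₁ ω - D ω > 0}).toReal)
          - Real.sqrt ((μ {ω | S₁ ω - D ω > 0}).toReal)) :
    ∀ Δ : ℝ, 0 ≤ Δ →
      (∫ ω, f (S ω + max (S₁ ω - Δ - D ω) 0) ∂μ) /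
          (Δ + (∫ ω, D ω ∂μ) + ∫ ω, max (S₁ ω - Δ - D ω) 0 ∂μ)
        ≤ (∫ ω, f (S ω + max (S₁ ω - D ω) 0) ∂μ) /
          ((∫ ω, D ω ∂μ) + ∫ ω, max (S₁ ω - D ω) 0 ∂μ) :=
  stmt4_general μ S S₁ D f f' hSm hS1m hDm hS0 hS10 hD0 hId hf0 hfanti hderiv habs hp hfpos hSint
    hDint hf'int hfint hcond
end

section
/- For f(x) = (x+1)^{-γ} with γ > 0, E[(f'(S))²] = γ² E[(S+1)^{-2γ-2}], so the general sufficient condition for Δ = 0 optimality becomes γ · E[D + S + 1] · sqrt(E[(S+1)^{-2γ-2}]) / E[(S + S₋₁ + 1)^{-γ}] ≤ 1/sqrt(P(S₋₁ - D > 0)) - sqrt(P(S₋₁ - D > 0)). -/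
open MeasureTheory ProbabilityTheory Set Real

/-- Corollary 2, polynomial reward: For `f x = (x+1)^(-γ)` with `γ > 0`,
`E[(f'(S))²] = γ² E[(S+1)^(-2γ-2)]`, and the general sufficient condition becomes
`γ E[D+S+1] √(E[(S+1)^(-2γ-2)]) / E[(S+S₋₁+1)^(-γ)] ≤ 1/√p - √p`. -/
theorem stmt6 {Ω : Type*} [MeasurableSpace Ω] (μ : Measure Ω) [IsProbabilityMeasure μ]
    (S S₁ D : Ω → ℝ) (γ : ℝ) (hγ : 0 < γ)
    (hSm : Measurable S) (hS1m : Measurable S₁) (hDm : Measurable D)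
    (hS0 : ∀ ω, 0 ≤ S ω) (hS10 : ∀ ω, 0 ≤ S₁ ω) (hD0 : ∀ ω, 0 ≤ D ω)
    (hIndSS : IndepFun S S₁ μ) (hId : IdentDistrib S S₁ μ μ)
    (hSint : Integrable S μ) (hDint : Integrable D μ) :
    (∫ ω, (-γ * (S ω + 1) ^ (-γ - 1)) ^ 2 ∂μ
        = γ ^ 2 * ∫ ω, (S ω + 1) ^ (-2 * γ - 2) ∂μ) ∧
    (((∫ ω, (D ω + S ω + 1) ∂μ) *
        Real.sqrt (∫ ω, (-γ * (S ω + 1) ^ (-γ - 1)) ^ 2 ∂μ) /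
          (∫ ω, (S ω + S₁ ω + 1) ^ (-γ) ∂μ)
        ≤ 1 / Real.sqrt ((μ {ω | S₁ ω - D ω > 0}).toReal)
            - Real.sqrt ((μ {ω | S₁ ω - D ω > 0}).toReal))
      ↔ (γ * (∫ ω, (D ω + S ω + 1) ∂μ) *
          Real.sqrt (∫ ω, (S ω + 1) ^ (-2 * γ - 2) ∂μ) /
            (∫ ω, (S ω + S₁ ω + 1) ^ (-γ) ∂μ)
          ≤ 1 / Real.sqrt ((μ {ω | S₁ ω - D ω > 0}).toReal)
              - Real.sqrt ((μ {ω | S₁ ω - D ω > 0}).toReal))) := by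

  have key : ∀ ω, (-γ * (S ω + 1) ^ (-γ - 1)) ^ 2 = γ ^ 2 * (S ω + 1) ^ (-2 * γ - 2) := by
    intro ω
    have h1 : (0:ℝ) < S ω + 1 := by linarith [hS0 ω]
    rw [mul_pow, neg_pow, ← Real.rpow_natCast ((S ω + 1) ^ (-γ - 1)) 2,
      ← Real.rpow_mul h1.le]
    ring_nf
  have heq : ∫ ω, (-γ * (S ω + 1) ^ (-γ - 1)) ^ 2 ∂μ
      = γ ^ 2 * ∫ ω, (S ω + 1) ^ (-2 * γ - 2) ∂μ := by
    rw [← integral_const_mul]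
    exact integral_congr_ae (Filter.Eventually.of_forall key)
  refine ⟨heq, ?_⟩
  have hI : 0 ≤ ∫ ω, (S ω + 1) ^ (-2 * γ - 2) ∂μ :=
    integral_nonneg fun ω => Real.rpow_nonneg (by linarith [hS0 ω]) _
  have hsq : Real.sqrt (∫ ω, (-γ * (S ω + 1) ^ (-γ - 1)) ^ 2 ∂μ)
      = γ * Real.sqrt (∫ ω, (S ω + 1) ^ (-2 * γ - 2) ∂μ) := by
    rw [heq, Real.sqrt_mul (sq_nonneg γ), Real.sqrt_sq hγ.le]
  rw [hsq, mul_left_comm, ← mul_assoc]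
end

section
/- Let κ > 0 and M_S(-κ) M_D(κ) < 1, and define Δ* = (1/κ) ln(1/(M_S(-κ)M_D(κ))). If (1/κ) ln(1/(M_D(κ) M_S(-κ))) + E[D] + E[max(S - D, 0)] < (1/κ) P(S - D ≤ 0), then on [0, Δ*] the function h(Δ) := Δ + E[D] + E[W(Δ)] - (1/κ) P(S - D ≤ Δ) is negative, and consequently the surrogate reward G_sur(Δ) = M_S(-κ)² M_D(κ) e^{κΔ} / (Δ + E[D] + E[W(Δ)]) is strictly decreasing on [0, Δ*], so Δ = 0 maximizes G_sur over [0, ∞). -/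
/-!
Write `X = S - D` and `d(Δ) = Δ + E[D] + E[(X - Δ)⁺]`. Since `X` has no atoms, differentiating
under the integral gives `d'(Δ) = P(X ≤ Δ)`, so `(e^{κΔ} / d)'` has the sign of
`κ d(Δ) - P(X ≤ Δ)`. As `E[(X - Δ)⁺]` decreases and `P(X ≤ Δ)` increases in `Δ`, this is at most
`κ (Δ* + E[D] + E[X⁺]) - P(X ≤ 0) < 0` on `[0, Δ*]`. Beyond `Δ*` the capped reward
`min (M_S M_D e^{κΔ}) 1` stays at `1 = M_S M_D e^{κΔ*}` while `d` keeps growing, so the capped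
surrogate at `Δ` is at most the surrogate at `min Δ Δ*`, hence at most its value at `0`.
-/

open MeasureTheory ProbabilityTheory Set Real

/-- The paper's `E[W(Δ)]` is `stopLoss μ (S - D) Δ`. -/
noncomputable def stopLoss {Ω : Type*} [MeasurableSpace Ω] (μ : Measure Ω) (X : Ω → ℝ) (t : ℝ) :
    ℝ :=
  ∫ ω, max (X ω - t) 0 ∂μ

lemma lipschitzWith_max_sub_zero (y : ℝ) : LipschitzWith 1 (fun t : ℝ => max (y - t) 0) :=
  (LipschitzWith.of_dist_le_mul fun s t => by
    simpa [Real.dist_eq, abs_sub_comm] using abs_max_sub_max_le_abs (y - s) (y - t) 0)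

lemma hasDerivAt_max_sub_zero {x y : ℝ} (h : y ≠ x) :
    HasDerivAt (fun t => max (y - t) 0) ((Ioi x).indicator (fun _ => -1) y) x := by
  rcases h.lt_or_gt with hyx | hxy
  · rw [indicator_of_notMem (show y ∉ Ioi x from not_lt.2 hyx.le)]
    refine (hasDerivAt_const x 0).congr_of_eventuallyEq ?_
    filter_upwards [lt_mem_nhds hyx] with t ht
    exact max_eq_right (by linarith)
  · rw [indicator_of_mem (mem_Ioi.2 hxy)]
    refine ((hasDerivAt_id x).const_sub y).congr_of_eventuallyEq ?_
    filter_upwards [gt_mem_nhds hxy] with t ht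
    exact max_eq_left (by linarith)

section StopLoss

variable {Ω : Type*} [MeasurableSpace Ω] {μ : Measure Ω} {X : Ω → ℝ}

lemma integrable_max_sub_zero [IsFiniteMeasure μ] (hX : Integrable X μ) (t : ℝ) :
    Integrable (fun ω => max (X ω - t) 0) μ :=
  (hX.sub (integrable_const t)).pos_part

lemma antitone_stopLoss [IsFiniteMeasure μ] (hX : Integrable X μ) : Antitone (stopLoss μ X) := fun s t hst =>
  integral_mono (integrable_max_sub_zero hX t) (integrable_max_sub_zero hX s)
    fun ω => max_le_max (by linarith) le_rfl

lemma hasDerivAt_stopLoss [IsFiniteMeasure μ] (hX : Integrable X μ) {x : ℝ}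
    (hx : μ {ω | X ω = x} = 0) :
    HasDerivAt (stopLoss μ X) (-μ.real {ω | x < X ω}) x := by
  have hXm := hX.aestronglyMeasurable
  have hne : ∀ᵐ ω ∂μ, X ω ≠ x := measure_eq_zero_iff_ae_notMem.1 hx
  have hs : NullMeasurableSet (X ⁻¹' Ioi x) μ :=
    hXm.aemeasurable.nullMeasurableSet_preimage measurableSet_Ioi
  have key := hasDerivAt_integral_of_dominated_loc_of_lip (μ := μ)
    (F := fun t ω => max (X ω - t) 0) (F' := fun ω => (Ioi x).indicator (fun _ => (-1 : ℝ)) (X ω))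
    (bound := fun _ => 1) (Metric.ball_mem_nhds x one_pos)
    (Filter.Eventually.of_forall fun t => (integrable_max_sub_zero hX t).aestronglyMeasurable)
    (integrable_max_sub_zero hX x) ?_
    (Filter.Eventually.of_forall fun ω => by
      simpa using (lipschitzWith_max_sub_zero (X ω)).lipschitzOnWith)
    (integrable_const 1) (hne.mono fun ω => hasDerivAt_max_sub_zero)
  · refine key.2.congr_deriv ?_
    simp_rw [← indicator_comp_right, Function.comp_def]
    rw [integral_indicator₀ hs, setIntegral_const, smul_eq_mul, mul_neg_one]
    rfl
  · exact ((measurable_const.indicator measurableSet_Ioi).comp_aemeasurable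
      hXm.aemeasurable).aestronglyMeasurable

lemma hasDerivAt_add_stopLoss [IsProbabilityMeasure μ] (hX : Integrable X μ) {x : ℝ}
    (hx : μ {ω | X ω = x} = 0) (c : ℝ) :
    HasDerivAt (fun t => t + c + stopLoss μ X t) (μ.real {ω | X ω ≤ x}) x := by
  have hs : NullMeasurableSet {ω | X ω ≤ x} μ :=
    hX.aestronglyMeasurable.aemeasurable.nullMeasurableSet_preimage measurableSet_Iic
  have hcompl : μ.real {ω | x < X ω} = 1 - μ.real {ω | X ω ≤ x} := by
    rw [← probReal_univ (μ := μ), ← measureReal_compl₀ hs]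
    congr 1; ext ω; simp
  refine (((hasDerivAt_id x).add_const c).add (hasDerivAt_stopLoss hX hx)).congr_deriv ?_
  rw [hcompl]; ring

lemma add_stopLoss_sub_le [IsFiniteMeasure μ] (hX : Integrable X μ) {κ : ℝ} (hκ : 0 ≤ κ) (c : ℝ) {t Δ Δ' : ℝ}
    (htΔ : t ≤ Δ) (hΔ : Δ ≤ Δ') :
    Δ + c + stopLoss μ X Δ - (1 / κ) * μ.real {ω | X ω ≤ Δ}
      ≤ Δ' + c + stopLoss μ X t - (1 / κ) * μ.real {ω | X ω ≤ t} := by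
  have hp : μ.real {ω | X ω ≤ t} ≤ μ.real {ω | X ω ≤ Δ} :=
    measureReal_mono fun ω hω => le_trans hω htΔ
  linarith [antitone_stopLoss hX htΔ, mul_le_mul_of_nonneg_left hp (one_div_nonneg.2 hκ)]

end StopLoss

lemma integrable_exp_neg_mul {Ω : Type*} [MeasurableSpace Ω] {μ : Measure Ω} [IsFiniteMeasure μ]
    {S : Ω → ℝ} (hS : AEStronglyMeasurable S μ) (hS0 : ∀ ω, 0 ≤ S ω) {κ : ℝ} (hκ : 0 ≤ κ) :
    Integrable (fun ω => exp (-κ * S ω)) μ :=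
  Integrable.of_bound (continuous_exp.comp_aestronglyMeasurable (hS.const_mul (-κ))) 1
    (ae_of_all _ fun ω => by simpa [abs_of_pos (exp_pos _)] using mul_nonneg hκ (hS0 ω))

lemma strictAntiOn_mul_exp_div {d d' : ℝ → ℝ} {A κ a b : ℝ} (hA : 0 < A)
    (hd : ∀ x ∈ Icc a b, HasDerivAt d (d' x) x) (hpos : ∀ x ∈ Icc a b, 0 < d x)
    (hlt : ∀ x ∈ Ioo a b, κ * d x < d' x) :
    StrictAntiOn (fun x => A * exp (κ * x) / d x) (Icc a b) := by
  have hG : ∀ x ∈ Icc a b, HasDerivAt (fun x => A * exp (κ * x) / d x)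
      ((A * (exp (κ * x) * κ) * d x - A * exp (κ * x) * d' x) / d x ^ 2) x := fun x hx =>
    ((((hasDerivAt_id x).const_mul κ).exp.const_mul A).div (hd x hx) (hpos x hx).ne').congr_deriv
      (by simp only [id, mul_one])
  refine strictAntiOn_of_hasDerivWithinAt_neg (convex_Icc a b)
    (fun x hx => (hG x hx).continuousAt.continuousWithinAt)
    (fun x hx => (hG x (interior_subset hx)).hasDerivWithinAt) fun x hx => ?_
  rw [interior_Icc] at hx
  have hnum : A * (exp (κ * x) * κ) * d x - A * exp (κ * x) * d' x
      = A * exp (κ * x) * (κ * d x - d' x) := by ring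
  rw [hnum]
  exact div_neg_of_neg_of_pos (mul_neg_of_pos_of_neg (by positivity) (sub_neg.2 (hlt x hx)))
    (pow_pos (hpos x (Ioo_subset_Icc_self hx)) 2)

lemma min_mul_exp_eq {κ m : ℝ} (hκ : 0 < κ) (hm : 0 < m) (x : ℝ) :
    min (m * exp (κ * x)) 1 = m * exp (κ * min x ((1 / κ) * log (1 / m))) := by
  have hmono : Monotone fun x => m * exp (κ * x) := fun s t hst =>
    mul_le_mul_of_nonneg_left (exp_le_exp.2 (mul_le_mul_of_nonneg_left hst hκ.le)) hm.le
  have hs : m * exp (κ * ((1 / κ) * log (1 / m))) = 1 := by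
    rw [← mul_assoc, mul_one_div_cancel hκ.ne', one_mul, exp_log (by positivity)]
    field_simp
  rw [hmono.map_min (a := x), hs]

lemma min_mul_exp_div_le {d : ℝ → ℝ} {κ m : ℝ} (hκ : 0 < κ) (hm : 0 < m) (hm1 : m ≤ 1)
    (hd : Monotone d) (hpos : ∀ x, 0 ≤ x → 0 < d x)
    (hanti : AntitoneOn (fun x => m * exp (κ * x) / d x) (Icc 0 ((1 / κ) * log (1 / m))))
    {x : ℝ} (hx : 0 ≤ x) :
    min (m * exp (κ * x)) 1 / d x ≤ m / d 0 := by
  set t := min x ((1 / κ) * log (1 / m))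
  have hs : 0 ≤ (1 / κ) * log (1 / m) :=
    mul_nonneg (by positivity) (log_nonneg (one_le_one_div hm hm1))
  have ht : 0 ≤ t := le_min hx hs
  calc min (m * exp (κ * x)) 1 / d x = m * exp (κ * t) / d x := by rw [min_mul_exp_eq hκ hm]
    _ ≤ m * exp (κ * t) / d t :=
      div_le_div_of_nonneg_left (by positivity) (hpos t ht) (hd (min_le_left _ _))
    _ ≤ m * exp (κ * 0) / d 0 := hanti ⟨le_rfl, hs⟩ ⟨ht, min_le_right _ _⟩ ht
    _ = m / d 0 := by rw [mul_zero, exp_zero, mul_one]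

theorem stmt9_general {Ω : Type*} [MeasurableSpace Ω] (μ : Measure Ω) [IsProbabilityMeasure μ]
    (S D : Ω → ℝ) (κ : ℝ) (hκ : 0 < κ)
    (hS0 : ∀ ω, 0 ≤ S ω)
    (hSint : Integrable S μ) (hDint : Integrable D μ)
    (hMDint : Integrable (fun ω => Real.exp (κ * D ω)) μ)
    (hcont : ∀ x : ℝ, μ {ω | S ω - D ω = x} = 0)
    (hMSMD : (∫ ω, Real.exp (-κ * S ω) ∂μ) * (∫ ω, Real.exp (κ * D ω) ∂μ) < 1)
    (hden : ∀ Δ : ℝ, 0 ≤ Δ →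
      0 < Δ + (∫ ω, D ω ∂μ) + ∫ ω, max (S ω - Δ - D ω) 0 ∂μ)
    (hcond : (1 / κ) * Real.log (1 /
          ((∫ ω, Real.exp (κ * D ω) ∂μ) * (∫ ω, Real.exp (-κ * S ω) ∂μ)))
        + (∫ ω, D ω ∂μ) + (∫ ω, max (S ω - D ω) 0 ∂μ)
      < (1 / κ) * (μ {ω | S ω - D ω ≤ 0}).toReal) :
    (∀ Δ ∈ Icc (0:ℝ) ((1 / κ) * Real.log (1 /
        ((∫ ω, Real.exp (-κ * S ω) ∂μ) * (∫ ω, Real.exp (κ * D ω) ∂μ)))),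
      Δ + (∫ ω, D ω ∂μ) + (∫ ω, max (S ω - Δ - D ω) 0 ∂μ)
        - (1 / κ) * (μ {ω | S ω - D ω ≤ Δ}).toReal < 0) ∧
    StrictAntiOn (fun Δ : ℝ =>
      (∫ ω, Real.exp (-κ * S ω) ∂μ) ^ 2 * (∫ ω, Real.exp (κ * D ω) ∂μ) *
          Real.exp (κ * Δ) /
        (Δ + (∫ ω, D ω ∂μ) + ∫ ω, max (S ω - Δ - D ω) 0 ∂μ))
      (Icc (0:ℝ) ((1 / κ) * Real.log (1 /
        ((∫ ω, Real.exp (-κ * S ω) ∂μ) * (∫ ω, Real.exp (κ * D ω) ∂μ))))) ∧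
    (∀ Δ : ℝ, 0 ≤ Δ →
      (∫ ω, Real.exp (-κ * S ω) ∂μ) *
          min ((∫ ω, Real.exp (-κ * S ω) ∂μ) * Real.exp (κ * Δ) *
              (∫ ω, Real.exp (κ * D ω) ∂μ)) 1 /
          (Δ + (∫ ω, D ω ∂μ) + ∫ ω, max (S ω - Δ - D ω) 0 ∂μ)
        ≤ (∫ ω, Real.exp (-κ * S ω) ∂μ) *
          min ((∫ ω, Real.exp (-κ * S ω) ∂μ) * (∫ ω, Real.exp (κ * D ω) ∂μ)) 1 /
          ((∫ ω, D ω ∂μ) + ∫ ω, max (S ω - D ω) 0 ∂μ)) := by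
  have hX : Integrable (fun ω => S ω - D ω) μ := hSint.sub hDint
  have hW : ∀ Δ, ∫ ω, max (S ω - Δ - D ω) 0 ∂μ = stopLoss μ (fun ω => S ω - D ω) Δ :=
    fun Δ => by simp only [stopLoss, sub_right_comm]
  have hW0 : ∫ ω, max (S ω - D ω) 0 ∂μ = stopLoss μ (fun ω => S ω - D ω) 0 := by
    simp only [stopLoss, sub_zero]
  simp only [hW] at hden ⊢
  rw [hW0] at hcond ⊢
  simp only [← measureReal_def] at hcond ⊢
  set a := ∫ ω, exp (-κ * S ω) ∂μ
  set b := ∫ ω, exp (κ * D ω) ∂μ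
  rw [mul_comm b a] at hcond
  set Δs := (1 / κ) * log (1 / (a * b))
  have ha : 0 < a := integral_exp_pos (integrable_exp_neg_mul hSint.1 hS0 hκ.le)
  have hb : 0 < b := integral_exp_pos hMDint
  have hd := fun x => hasDerivAt_add_stopLoss hX (hcont x) (∫ ω, D ω ∂μ)
  have hneg : ∀ Δ ∈ Icc 0 Δs, Δ + (∫ ω, D ω ∂μ) + stopLoss μ (fun ω => S ω - D ω) Δ
      - (1 / κ) * μ.real {ω | S ω - D ω ≤ Δ} < 0 := fun Δ hΔ =>
    (add_stopLoss_sub_le hX hκ.le _ hΔ.1 hΔ.2).trans_lt (by linarith)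
  have hanti {A : ℝ} (hA : 0 < A) := strictAntiOn_mul_exp_div hA (fun x _ => hd x)
    (fun x hx => hden x hx.1) fun x hx => (lt_div_iff₀' hκ).1 <| by
      linarith [one_div_mul_eq_div κ (μ.real {ω | S ω - D ω ≤ x}),
        hneg x (Ioo_subset_Icc_self hx)]
  refine ⟨hneg, hanti (by positivity), fun Δ hΔ => ?_⟩
  have hmono : Monotone fun t => t + (∫ ω, D ω ∂μ) + stopLoss μ (fun ω => S ω - D ω) t :=
    monotone_of_deriv_nonneg (fun x => (hd x).differentiableAt)
      fun x => (hd x).deriv ▸ measureReal_nonneg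
  have hcapped := min_mul_exp_div_le hκ (mul_pos ha hb) hMSMD.le hmono hden
    (hanti (mul_pos ha hb)).antitoneOn hΔ
  rw [min_eq_left hMSMD.le, mul_right_comm _ (exp _), mul_div_assoc, mul_div_assoc]
  simpa only [zero_add] using mul_le_mul_of_nonneg_left hcapped ha.le

/-- Theorem 2, case 2, sufficient condition: With
`Δ* = (1/κ) ln (1/(M_S(-κ) M_D(κ)))`, if
`(1/κ) ln (1/(M_D(κ) M_S(-κ))) + E[D] + E[max (S-D) 0] < (1/κ) P(S - D ≤ 0)`,
then `h(Δ) = Δ + E[D] + E[W(Δ)] - (1/κ) P(S - D ≤ Δ)` is negative on `[0, Δ*]`,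
the surrogate reward `M_S(-κ)² M_D(κ) e^{κΔ} / (Δ + E[D] + E[W(Δ)])` is strictly
decreasing on `[0, Δ*]`, and `Δ = 0` maximizes the surrogate reward over `[0, ∞)`. -/
theorem stmt9 {Ω : Type*} [MeasurableSpace Ω] (μ : Measure Ω) [IsProbabilityMeasure μ]
    (S D : Ω → ℝ) (κ : ℝ) (hκ : 0 < κ)
    (hSm : Measurable S) (hDm : Measurable D)
    (hS0 : ∀ ω, 0 ≤ S ω) (hD0 : ∀ ω, 0 ≤ D ω)
    (hInd : IndepFun S D μ)
    (hSint : Integrable S μ) (hDint : Integrable D μ)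
    (hMDint : Integrable (fun ω => Real.exp (κ * D ω)) μ)
    (hcont : ∀ x : ℝ, μ {ω | S ω - D ω = x} = 0)
    (hMSMD : (∫ ω, Real.exp (-κ * S ω) ∂μ) * (∫ ω, Real.exp (κ * D ω) ∂μ) < 1)
    (hden : ∀ Δ : ℝ, 0 ≤ Δ →
      0 < Δ + (∫ ω, D ω ∂μ) + ∫ ω, max (S ω - Δ - D ω) 0 ∂μ)
    (hcond : (1 / κ) * Real.log (1 /
          ((∫ ω, Real.exp (κ * D ω) ∂μ) * (∫ ω, Real.exp (-κ * S ω) ∂μ)))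
        + (∫ ω, D ω ∂μ) + (∫ ω, max (S ω - D ω) 0 ∂μ)
      < (1 / κ) * (μ {ω | S ω - D ω ≤ 0}).toReal) :
    (∀ Δ ∈ Icc (0:ℝ) ((1 / κ) * Real.log (1 /
        ((∫ ω, Real.exp (-κ * S ω) ∂μ) * (∫ ω, Real.exp (κ * D ω) ∂μ)))),
      Δ + (∫ ω, D ω ∂μ) + (∫ ω, max (S ω - Δ - D ω) 0 ∂μ)
        - (1 / κ) * (μ {ω | S ω - D ω ≤ Δ}).toReal < 0) ∧
    StrictAntiOn (fun Δ : ℝ =>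
      (∫ ω, Real.exp (-κ * S ω) ∂μ) ^ 2 * (∫ ω, Real.exp (κ * D ω) ∂μ) *
          Real.exp (κ * Δ) /
        (Δ + (∫ ω, D ω ∂μ) + ∫ ω, max (S ω - Δ - D ω) 0 ∂μ))
      (Icc (0:ℝ) ((1 / κ) * Real.log (1 /
        ((∫ ω, Real.exp (-κ * S ω) ∂μ) * (∫ ω, Real.exp (κ * D ω) ∂μ))))) ∧
    (∀ Δ : ℝ, 0 ≤ Δ →
      (∫ ω, Real.exp (-κ * S ω) ∂μ) *
          min ((∫ ω, Real.exp (-κ * S ω) ∂μ) * Real.exp (κ * Δ) *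
              (∫ ω, Real.exp (κ * D ω) ∂μ)) 1 /
          (Δ + (∫ ω, D ω ∂μ) + ∫ ω, max (S ω - Δ - D ω) 0 ∂μ)
        ≤ (∫ ω, Real.exp (-κ * S ω) ∂μ) *
          min ((∫ ω, Real.exp (-κ * S ω) ∂μ) * (∫ ω, Real.exp (κ * D ω) ∂μ)) 1 /
          ((∫ ω, D ω ∂μ) + ∫ ω, max (S ω - D ω) 0 ∂μ)) :=
  stmt9_general μ S D κ hκ hS0 hSint hDint hMDint hcont hMSMD hden hcond
end
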